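/- Chebyshev–Mertens theorem: Σ_{p≤N, p prime} 1/p = log log N + O(1) for N ≥ 3. -/

import Mathlib

/-!
Writing `log n! = ∑_{p ≤ n} v_p(n!) log p` and inserting Legendre's bounds
`n / p - 1 ≤ v_p(n!) ≤ n / (p - 1)`, together with `n log n - n ≤ log n! ≤ n log n` and
Chebyshev's `θ(n) ≤ n log 4`, gives Mertens' first theorem `∑_{p ≤ x} log p / p = log x + O(1)`;
the upper bound for `v_p(n!)` costs `n ∑_p log p / (p (p - 1))`, a convergent series.
Abel summation against `1 / log t` then turns this into `∑_{p ≤ x} 1 / p = log log x + O(1)`: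
the main term integrates to `∫ dt / (t log t) = log log x`, and the bounded error is integrated
against `1 / (t log² t)`, whose integral over `[2, ∞)` is finite.
-/

open Finset Real Chebyshev MeasureTheory
open scoped Nat

theorem Nat.primeFactors_factorial (n : ℕ) : (n)!.primeFactors = Nat.primesLE n := by
  ext p
  simp only [Nat.mem_primeFactors, Nat.mem_primesLE, ne_eq, Nat.factorial_ne_zero,
    not_false_eq_true, and_true]
  exact ⟨fun ⟨hp, h⟩ => ⟨hp.dvd_factorial.1 h, hp⟩, fun ⟨h, hp⟩ => ⟨hp, hp.dvd_factorial.2 h⟩⟩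

theorem log_factorial_eq_sum_primesLE (n : ℕ) :
    log ((n)! : ℝ) = ∑ p ∈ Nat.primesLE n, ((n)!).factorization p * log p := by
  rw [log_nat_eq_sum_factorization, Finsupp.sum, Nat.support_factorization,
    Nat.primeFactors_factorial]

theorem div_sub_one_le_factorization_factorial {p : ℕ} (hp : p.Prime) (n : ℕ) :
    (n : ℝ) / p - 1 ≤ ((n)!).factorization p := by
  have hdiv : n / p ≤ ((n)!).factorization p := by
    rcases Nat.eq_zero_or_pos n with rfl | hn
    · simp
    rw [Nat.factorization_factorial hp (Nat.lt_add_one_of_le (Nat.log_le_self p n))]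
    simpa using Finset.single_le_sum (f := fun i => n / p ^ i) (fun _ _ => Nat.zero_le _)
      (Finset.mem_Ico.2 ⟨le_rfl, Nat.lt_add_one_of_le hn⟩ : 1 ∈ Ico 1 (n + 1))
  calc (n : ℝ) / p - 1 ≤ ⌊(n : ℝ) / p⌋₊ := (Nat.sub_one_lt_floor _).le
    _ = (n / p : ℕ) := by rw [Nat.floor_div_eq_div]
    _ ≤ _ := by exact_mod_cast hdiv

theorem factorization_factorial_le_div_sub_one {p : ℕ} (hp : p.Prime) (n : ℕ) :
    (((n)!).factorization p : ℝ) ≤ n / (p - 1) := by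
  calc (((n)!).factorization p : ℝ) ≤ (n / (p - 1) : ℕ) := by
        exact_mod_cast Nat.factorization_factorial_le_div_pred hp n
    _ ≤ _ := by rw [← Nat.cast_pred hp.pos]; exact Nat.cast_div_le

theorem log_div_mul_sub_one_le (k : ℕ) :
    log k / (k * (k - 1)) ≤ 4 * (k : ℝ) ^ (-(3 / 2) : ℝ) := by
  rcases lt_or_ge k 2 with hk | hk
  · interval_cases k <;> simp
  have hk2 : (2 : ℝ) ≤ k := by exact_mod_cast hk
  calc log k / (k * (k - 1)) ≤ (k ^ (1 / 2 : ℝ) / (1 / 2)) / (k ^ 2 / 2) := by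
        gcongr
        · exact log_le_rpow_div (by positivity) (by norm_num)
        · nlinarith
    _ = 4 * (k : ℝ) ^ (-(3 / 2) : ℝ) := by
        rw [show (-(3 / 2) : ℝ) = 1 / 2 - (2 : ℕ) by norm_num, rpow_sub_natCast (by positivity)]
        ring

theorem log_div_mul_sub_one_nonneg (k : ℕ) : 0 ≤ log k / (k * (k - 1)) := by
  rcases Nat.eq_zero_or_pos k with rfl | hk
  · simp
  have : (1 : ℝ) ≤ k := by exact_mod_cast hk
  have := log_nonneg this
  positivity

theorem summable_log_div_mul_sub_one : Summable fun k : ℕ => log k / (k * (k - 1)) :=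
  .of_nonneg_of_le log_div_mul_sub_one_nonneg log_div_mul_sub_one_le
    ((summable_nat_rpow.2 (by norm_num)).mul_left 4)

theorem log_factorial_le (n : ℕ) : log ((n)! : ℝ) ≤ n * log n := by
  rw [← log_pow]
  gcongr
  exact_mod_cast Nat.factorial_le_pow n

theorem sub_le_log_factorial (n : ℕ) : n * log n - n ≤ log ((n)! : ℝ) := by
  rcases Nat.eq_zero_or_pos n with rfl | hn
  · simp
  have : 0 ≤ log n := log_natCast_nonneg n
  have : 0 ≤ log (2 * π) := log_nonneg (by linarith [pi_gt_three])
  linarith [Stirling.le_log_factorial_stirling hn.ne']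

theorem sum_primesLE_log_div_le (n : ℕ) :
    ∑ p ∈ Nat.primesLE n, log p / p ≤ log n + log 4 := by
  rcases Nat.eq_zero_or_pos n with rfl | hn
  · simp [log_nonneg]
  have hn' : (0 : ℝ) < n := by exact_mod_cast hn
  refine le_of_mul_le_mul_left ?_ hn'
  calc n * ∑ p ∈ Nat.primesLE n, log p / p
      = ∑ p ∈ Nat.primesLE n, ((n : ℝ) / p - 1) * log p + θ n := by
        rw [theta_eq_sum_primesLE_log, mul_sum, ← sum_add_distrib]
        exact sum_congr rfl fun p _ => by ring
    _ ≤ log ((n)! : ℝ) + log 4 * n := by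
        rw [log_factorial_eq_sum_primesLE]
        gcongr with p hp
        · exact div_sub_one_le_factorization_factorial (Nat.prime_of_mem_primesLE hp) n
        · exact theta_le_log4_mul_x hn'.le
    _ ≤ n * (log n + log 4) := by linarith [log_factorial_le n]

theorem exists_log_sub_le_sum_primesLE_log_div :
    ∃ K, ∀ n : ℕ, log n - K ≤ ∑ p ∈ Nat.primesLE n, log p / p := by
  set K := ∑' k : ℕ, log k / (k * (k - 1))
  refine ⟨1 + K, fun n => ?_⟩
  have hK : ∑ p ∈ Nat.primesLE n, log p / (p * (p - 1)) ≤ K :=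
    summable_log_div_mul_sub_one.sum_le_tsum _ fun k _ => log_div_mul_sub_one_nonneg k
  rcases Nat.eq_zero_or_pos n with rfl | hn
  · simp only [Nat.primesLE_zero, sum_empty, Nat.cast_zero, log_zero] at hK ⊢
    linarith
  have hn' : (0 : ℝ) < n := by exact_mod_cast hn
  refine le_of_mul_le_mul_left ?_ hn'
  calc n * (log n - (1 + K)) ≤ log ((n)! : ℝ) - n * K := by linarith [sub_le_log_factorial n]
    _ ≤ ∑ p ∈ Nat.primesLE n, (n : ℝ) / (p - 1) * log p
          - n * ∑ p ∈ Nat.primesLE n, log p / (p * (p - 1)) := by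
        rw [log_factorial_eq_sum_primesLE]
        gcongr with p hp
        exact factorization_factorial_le_div_sub_one (Nat.prime_of_mem_primesLE hp) n
    _ = n * ∑ p ∈ Nat.primesLE n, log p / p := by
        rw [mul_sum, mul_sum, ← sum_sub_distrib]
        refine sum_congr rfl fun p hp => ?_
        have hp : (2 : ℝ) ≤ p := by exact_mod_cast (Nat.prime_of_mem_primesLE hp).two_le
        have : (p : ℝ) - 1 ≠ 0 := by linarith
        field_simp

theorem exists_abs_sum_primesLE_log_div_sub_log_le :
    ∃ C, ∀ n : ℕ, |∑ p ∈ Nat.primesLE n, log p / p - log n| ≤ C := by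
  obtain ⟨K, hK⟩ := exists_log_sub_le_sum_primesLE_log_div
  refine ⟨max K (log 4), fun n => abs_le.2 ⟨?_, ?_⟩⟩
  · linarith [hK n, le_max_left K (log 4)]
  · linarith [sum_primesLE_log_div_le n, le_max_right K (log 4)]

theorem abs_log_sub_log_floor_le {t : ℝ} (ht : 1 ≤ t) : |log t - log ⌊t⌋₊| ≤ log 2 := by
  have hfloor : (1 : ℝ) ≤ ⌊t⌋₊ := by exact_mod_cast Nat.one_le_floor_iff t |>.2 ht
  rw [abs_of_nonneg (sub_nonneg.2 (log_le_log (by linarith) (Nat.floor_le (by linarith)))),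
    sub_le_iff_le_add, ← log_mul (by norm_num) (by linarith)]
  exact log_le_log (by linarith) (by linarith [Nat.lt_floor_add_one t])

theorem exists_abs_sum_primesLE_floor_log_div_sub_log_le :
    ∃ C, ∀ t : ℝ, 1 ≤ t → |∑ p ∈ Nat.primesLE ⌊t⌋₊, log p / p - log t| ≤ C := by
  obtain ⟨C, hC⟩ := exists_abs_sum_primesLE_log_div_sub_log_le
  refine ⟨C + log 2, fun t ht => ?_⟩
  calc |∑ p ∈ Nat.primesLE ⌊t⌋₊, log p / p - log t|
      ≤ |∑ p ∈ Nat.primesLE ⌊t⌋₊, log p / p - log ⌊t⌋₊| + |log ⌊t⌋₊ - log t| :=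
        abs_sub_le _ _ _
    _ ≤ C + log 2 := add_le_add (hC _) (abs_sub_comm (log t) _ ▸ abs_log_sub_log_floor_le ht)

theorem continuousOn_inv_div_log : ContinuousOn (fun t => t⁻¹ / log t) (Set.Ioi 1) :=
  fun t (ht : 1 < t) => by
    have : log t ≠ 0 := (log_pos ht).ne'
    have : t ≠ 0 := by positivity
    exact ContinuousAt.continuousWithinAt (by fun_prop (disch := assumption))

theorem continuousOn_inv_div_log_sq : ContinuousOn (fun t => t⁻¹ / log t ^ 2) (Set.Ioi 1) :=
  fun t (ht : 1 < t) => by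
    have : log t ^ 2 ≠ 0 := (pow_pos (log_pos ht) 2).ne'
    have : t ≠ 0 := by positivity
    exact ContinuousAt.continuousWithinAt (by fun_prop (disch := assumption))

theorem uIcc_subset_Ioi_of_lt {a b c : ℝ} (hca : c < a) (hab : a ≤ b) :
    Set.uIcc a b ⊆ Set.Ioi c := by
  rw [Set.uIcc_of_le hab]
  exact Set.Icc_subset_Ioi_iff hab |>.2 hca

theorem sum_div_log_eq_add_integral {c : ℕ → ℝ} (hc0 : c 0 = 0) (hc1 : c 1 = 0) {x : ℝ}
    (hx : 2 ≤ x) :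
    ∑ k ∈ Icc 0 ⌊x⌋₊, c k / log k = (∑ k ∈ Icc 0 ⌊x⌋₊, c k) / log x
      + ∫ t in 2..x, t⁻¹ / log t ^ 2 * ∑ k ∈ Icc 0 ⌊t⌋₊, c k := by
  have hIcc : Set.Icc 2 x ⊆ Set.Ioi 1 := Set.Icc_subset_Ioi_iff hx |>.2 one_lt_two
  simp_rw [div_eq_inv_mul (c _)]
  rw [sum_mul_eq_sub_integral_mul₁ c (f := fun t => (log t)⁻¹) hc0 hc1 x ?diff ?int,
    intervalIntegral.integral_of_le hx, sub_eq_add_neg, ← integral_neg, div_eq_inv_mul]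
  · simp [deriv_inv_log, neg_div]
  case diff =>
    intro t ht
    have ht1 : 1 < t := hIcc ht
    exact differentiableAt_inv_log (by positivity) ht1.ne' (by linarith)
  case int =>
    simp_rw [deriv_inv_log, neg_div]
    exact (continuousOn_inv_div_log_sq.mono hIcc).neg.integrableOn_Icc

theorem abs_integral_inv_div_log_sq_mul_le {R : ℝ → ℝ} {C a b : ℝ} (ha : 1 < a) (hab : a ≤ b)
    (hR_int : IntervalIntegrable (fun t => t⁻¹ / log t ^ 2 * R t) volume a b)
    (hR : ∀ t ∈ Set.Icc a b, |R t| ≤ C) :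
    |∫ t in a..b, t⁻¹ / log t ^ 2 * R t| ≤ C / log a := by
  have hC : 0 ≤ C := (abs_nonneg _).trans (hR a ⟨le_rfl, hab⟩)
  have hw : ∀ t ∈ Set.Icc a b, 0 ≤ t⁻¹ / log t ^ 2 := fun t ht => by
    have : 0 ≤ t := by linarith [ht.1]
    positivity
  calc |∫ t in a..b, t⁻¹ / log t ^ 2 * R t|
      ≤ ∫ t in a..b, |t⁻¹ / log t ^ 2 * R t| :=
        intervalIntegral.abs_integral_le_integral_abs hab
    _ ≤ ∫ t in a..b, C * (t⁻¹ / log t ^ 2) := by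
        have hw_int := (continuousOn_inv_div_log_sq.mono
          (uIcc_subset_Ioi_of_lt ha hab)).intervalIntegrable (μ := volume)
        refine intervalIntegral.integral_mono_on hab hR_int.abs (hw_int.const_mul C) fun t ht => ?_
        rw [abs_mul, abs_of_nonneg (hw t ht), mul_comm]
        exact mul_le_mul_of_nonneg_right (hR t ht) (hw t ht)
    _ = C * ((log a)⁻¹ - (log b)⁻¹) := by
        rw [intervalIntegral.integral_const_mul, integral_inv_div_log_sq ha (by linarith)]
    _ ≤ C / log a := by
        have : 0 ≤ (log b)⁻¹ := inv_nonneg.2 (log_nonneg (by linarith))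
        rw [div_eq_mul_inv]
        nlinarith

theorem exists_abs_sum_div_log_sub_log_log_le {c : ℕ → ℝ} (hc0 : c 0 = 0) (hc1 : c 1 = 0)
    {C : ℝ} (hC : ∀ t : ℝ, 2 ≤ t → |∑ k ∈ Icc 0 ⌊t⌋₊, c k - log t| ≤ C) :
    ∃ C', ∀ x : ℝ, 2 ≤ x → |∑ k ∈ Icc 0 ⌊x⌋₊, c k / log k - log (log x)| ≤ C' := by
  refine ⟨1 + |log (log 2)| + 2 * (C / log 2), fun x hx => ?_⟩
  set A : ℝ → ℝ := fun t => ∑ k ∈ Icc 0 ⌊t⌋₊, c k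
  have hsub : Set.uIcc 2 x ⊆ Set.Ioi 1 := uIcc_subset_Ioi_of_lt one_lt_two hx
  have hA_int : IntervalIntegrable (fun t => t⁻¹ / log t ^ 2 * A t) volume 2 x :=
    (intervalIntegrable_iff_integrableOn_Icc_of_le hx).2 <| integrableOn_mul_sum_Icc c
      zero_le_two ((continuousOn_inv_div_log_sq.mono (Set.uIcc_of_le hx ▸ hsub)).integrableOn_Icc)
  have hR_int : IntervalIntegrable (fun t => t⁻¹ / log t ^ 2 * (A t - log t)) volume 2 x := by
    simp_rw [mul_sub]
    refine hA_int.sub (ContinuousOn.intervalIntegrable ?_)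
    exact (continuousOn_inv_div_log_sq.mono hsub).mul
      (continuousOn_log.mono fun t ht => (zero_lt_one.trans (hsub ht)).ne')
  have hsplit : ∫ t in 2..x, t⁻¹ / log t ^ 2 * A t
      = (log (log x) - log (log 2)) + ∫ t in 2..x, t⁻¹ / log t ^ 2 * (A t - log t) := by
    rw [← integral_inv_div_log one_lt_two (by linarith), ← intervalIntegral.integral_add
      (continuousOn_inv_div_log.mono hsub).intervalIntegrable hR_int]
    refine intervalIntegral.integral_congr fun t ht => ?_
    have : log t ≠ 0 := (log_pos (hsub ht)).ne'
    field_simp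
    ring
  have hlog2 : 0 < log 2 := log_pos one_lt_two
  have hlogx : log 2 ≤ log x := log_le_log two_pos hx
  have hend : |(A x - log x) / log x| ≤ C / log 2 := by
    rw [abs_div, abs_of_pos (hlog2.trans_le hlogx)]
    exact div_le_div₀ ((abs_nonneg _).trans (hC x hx)) (hC x hx) hlog2 hlogx
  have herr := abs_integral_inv_div_log_sq_mul_le one_lt_two hx hR_int fun t ht => hC t ht.1
  have hAx : A x / log x = 1 + (A x - log x) / log x := by
    field_simp [(hlog2.trans_le hlogx).ne']
    ring
  rw [sum_div_log_eq_add_integral hc0 hc1 hx]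
  change |(A x / log x + ∫ t in 2..x, t⁻¹ / log t ^ 2 * A t) - log (log x)| ≤ _
  rw [hsplit, hAx]
  obtain ⟨hend₁, hend₂⟩ := abs_le.1 hend
  obtain ⟨herr₁, herr₂⟩ := abs_le.1 herr
  rw [abs_le]
  constructor <;> linarith [le_abs_self (log (log 2)), neg_abs_le (log (log 2))]

theorem sum_Icc_ite_prime {M : Type*} [AddCommMonoid M] (f : ℕ → M) (n : ℕ) :
    ∑ k ∈ Icc 0 n, (if k.Prime then f k else 0) = ∑ p ∈ Nat.primesLE n, f p := by
  rw [← sum_filter, Nat.primesLE_eq_filter_Icc_zero]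

theorem chebyshev_mertens :
    ∃ C : ℝ, 0 < C ∧ ∀ N : ℕ, 3 ≤ N →
      |(∑ p ∈ (Finset.Icc 1 N).filter Nat.Prime, (1 : ℝ) / p)
        - Real.log (Real.log N)| ≤ C := by
  obtain ⟨C, hC⟩ := exists_abs_sum_primesLE_floor_log_div_sub_log_le
  obtain ⟨C', hC'⟩ := exists_abs_sum_div_log_sub_log_log_le
    (c := fun k => if k.Prime then log k / k else 0) (by simp) (by simp) (C := C)
    fun t ht => by simpa only [sum_Icc_ite_prime] using hC t (by linarith)
  refine ⟨max C' 1, by positivity, fun N hN => ?_⟩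
  have hN' : (2 : ℝ) ≤ N := by exact_mod_cast (by omega : 2 ≤ N)
  have hsum : ∑ k ∈ Icc 0 N, (if k.Prime then log k / k else 0) / log k
      = ∑ p ∈ (Icc 1 N).filter Nat.Prime, (1 : ℝ) / p := by
    simp_rw [ite_div, zero_div]
    rw [sum_Icc_ite_prime, Nat.primesLE_eq_filter_Icc_one]
    refine sum_congr rfl fun p hp => ?_
    have : log p ≠ 0 := (log_pos (by exact_mod_cast (mem_filter.1 hp).2.one_lt)).ne'
    field_simp
  simpa only [Nat.floor_natCast, hsum] using (hC' N hN').trans (le_max_left _ _)
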